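/- arXiv:1910.08795 — 2 statements merged into one kernel-verified Lean document; each statement's English description precedes it below -/
import Mathlib

section
/- Let σ be a random ranking distributed according to a Mallows model MM(π, θ) with θ > 0, under the Kendall's-τ distance. For any items i, j with π(i) < π(j), define Δ_{ij} = E_π[σ(j)] − E_π[σ(i)]. Then Δ_{ij} = ∑_{σ: σ(i)<σ(j)} (σ(j) − σ(i)) (p(σ) − p(στ)), where τ is the transposition swapping the values of positions i and j, and consequently Δ_{ij} > 0. -/
def kendall {n : ℕ} (σ π : Equiv.Perm (Fin n)) : ℕ :=
  (Finset.univ.filter (fun p : Fin n × Fin n =>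
    p.1 < p.2 ∧ ((σ p.1 < σ p.2 ∧ π p.2 < π p.1) ∨ (σ p.2 < σ p.1 ∧ π p.1 < π p.2)))).card

noncomputable def mallowsP {n : ℕ} (θ : ℝ) (π σ : Equiv.Perm (Fin n)) : ℝ :=
  Real.exp (-θ * kendall σ π) / ∑ σ' : Equiv.Perm (Fin n), Real.exp (-θ * kendall σ' π)

noncomputable def expRank {n : ℕ} (θ : ℝ) (π : Equiv.Perm (Fin n)) (i : Fin n) : ℝ :=
  ∑ σ : Equiv.Perm (Fin n), (((σ i : ℕ) : ℝ) + 1) * mallowsP θ π σ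

namespace Stmt4Aux

open Finset Equiv

variable {n : ℕ}

/-- indicator of discordance of the pair `(a,b)` -/
def g (σ π : Equiv.Perm (Fin n)) (a b : Fin n) : ℕ :=
  if (σ a < σ b ∧ π b < π a) ∨ (σ b < σ a ∧ π a < π b) then 1 else 0

lemma g_symm (σ π : Equiv.Perm (Fin n)) (a b : Fin n) : g σ π a b = g σ π b a :=
  if_congr or_comm rfl rfl

lemma g_self (σ π : Equiv.Perm (Fin n)) (a : Fin n) : g σ π a a = 0 := by
  simp [g]

/-- doubled (symmetrized) kendall count -/
def K2 (σ π : Equiv.Perm (Fin n)) : ℕ := ∑ a : Fin n, ∑ b : Fin n, g σ π a b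

lemma kendall_eq (σ π : Equiv.Perm (Fin n)) :
    kendall σ π = ∑ p : Fin n × Fin n, if p.1 < p.2 then g σ π p.1 p.2 else 0 := by
  rw [kendall, Finset.card_filter]
  refine Finset.sum_congr rfl fun p _ => ?_
  by_cases h : p.1 < p.2 <;> simp [h, g]

lemma K2_eq (σ π : Equiv.Perm (Fin n)) : K2 σ π = 2 * kendall σ π := by
  have h1 : K2 σ π = ∑ p : Fin n × Fin n, g σ π p.1 p.2 := by
    rw [K2, ← Finset.sum_product', Finset.univ_product_univ]
  have h2 : ∑ p : Fin n × Fin n, (if p.1 < p.2 then g σ π p.1 p.2 else 0) =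
      ∑ p : Fin n × Fin n, (if p.2 < p.1 then g σ π p.1 p.2 else 0) := by
    apply Fintype.sum_equiv (Equiv.prodComm (Fin n) (Fin n))
    intro p
    simp only [Equiv.prodComm_apply, Prod.fst_swap, Prod.snd_swap]
    rw [g_symm]
    exact if_congr Iff.rfl rfl rfl
  rw [h1, two_mul, kendall_eq]
  nth_rewrite 2 [h2]
  rw [← Finset.sum_add_distrib]
  refine Finset.sum_congr rfl fun p _ => ?_
  rcases lt_trichotomy p.1 p.2 with h | h | h
  · simp [h, not_lt.2 h.le]
  · simp [h, g_self]
  · simp [h, not_lt.2 h.le]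

lemma sum_split {M : Type*} [AddCommMonoid M] {i j : Fin n} (hij : i ≠ j) (f : Fin n → M) :
    ∑ a : Fin n, f a = f i + f j + ∑ a ∈ Finset.univ \ {i, j}, f a := by
  rw [← Finset.sum_sdiff (Finset.subset_univ {i, j}), Finset.sum_pair hij, add_comm]

lemma K2_decomp {i j : Fin n} (hij : i ≠ j) (σ π : Equiv.Perm (Fin n)) :
    K2 σ π = 2 * g σ π i j + 2 * ∑ a ∈ Finset.univ \ {i, j}, (g σ π a i + g σ π a j)
      + ∑ a ∈ Finset.univ \ {i, j}, ∑ b ∈ Finset.univ \ {i, j}, g σ π a b := by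
  rw [K2, sum_split hij (f := fun a => ∑ b : Fin n, g σ π a b)]
  rw [sum_split hij (f := fun b => g σ π i b), sum_split hij (f := fun b => g σ π j b)]
  have hrow : ∀ a ∈ Finset.univ \ ({i, j} : Finset (Fin n)),
      ∑ b : Fin n, g σ π a b = g σ π a i + g σ π a j + ∑ b ∈ Finset.univ \ {i, j}, g σ π a b :=
    fun a _ => sum_split hij _
  rw [Finset.sum_congr rfl hrow]
  have hji : g σ π j i = g σ π i j := g_symm σ π j i
  have hEi : ∑ b ∈ Finset.univ \ ({i, j} : Finset (Fin n)), g σ π i b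
      = ∑ a ∈ Finset.univ \ ({i, j} : Finset (Fin n)), g σ π a i :=
    Finset.sum_congr rfl fun b _ => g_symm σ π i b
  have hEj : ∑ b ∈ Finset.univ \ ({i, j} : Finset (Fin n)), g σ π j b
      = ∑ a ∈ Finset.univ \ ({i, j} : Finset (Fin n)), g σ π a j :=
    Finset.sum_congr rfl fun b _ => g_symm σ π j b
  rw [Finset.sum_add_distrib, Finset.sum_add_distrib, hji, hEi, hEj, g_self, g_self]
  ring

lemma key (σ π : Equiv.Perm (Fin n)) (i j a : Fin n) (hai : a ≠ i) (haj : a ≠ j)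
    (hσ : σ i < σ j) (hπ : π i < π j) :
    g σ π a i + g σ π a j ≤
      g (σ * Equiv.swap i j) π a i + g (σ * Equiv.swap i j) π a j := by
  have h1 : (σ * Equiv.swap i j) a = σ a := by
    simp [Equiv.Perm.mul_apply, Equiv.swap_apply_of_ne_of_ne hai haj]
  have h2 : (σ * Equiv.swap i j) i = σ j := by simp
  have h3 : (σ * Equiv.swap i j) j = σ i := by simp
  have d1 : ((σ a : Fin n) : ℕ) ≠ ((σ i : Fin n) : ℕ) :=
    fun h => hai (σ.injective (Fin.ext h))
  have d2 : ((σ a : Fin n) : ℕ) ≠ ((σ j : Fin n) : ℕ) :=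
    fun h => haj (σ.injective (Fin.ext h))
  have e1 : ((π a : Fin n) : ℕ) ≠ ((π i : Fin n) : ℕ) :=
    fun h => hai (π.injective (Fin.ext h))
  have e2 : ((π a : Fin n) : ℕ) ≠ ((π j : Fin n) : ℕ) :=
    fun h => haj (π.injective (Fin.ext h))
  simp only [Fin.lt_def] at hσ hπ
  simp only [g, h1, h2, h3, Fin.lt_def]
  split_ifs <;> omega

lemma offdiag_eq (σ π : Equiv.Perm (Fin n)) (i j a b : Fin n)
    (hai : a ≠ i) (haj : a ≠ j) (hbi : b ≠ i) (hbj : b ≠ j) :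
    g (σ * Equiv.swap i j) π a b = g σ π a b := by
  have h1 : (σ * Equiv.swap i j) a = σ a := by
    simp [Equiv.Perm.mul_apply, Equiv.swap_apply_of_ne_of_ne hai haj]
  have h2 : (σ * Equiv.swap i j) b = σ b := by
    simp [Equiv.Perm.mul_apply, Equiv.swap_apply_of_ne_of_ne hbi hbj]
  simp only [g, h1, h2]

lemma kendall_lt (σ π : Equiv.Perm (Fin n)) (i j : Fin n)
    (hσ : σ i < σ j) (hπ : π i < π j) :
    kendall σ π < kendall (σ * Equiv.swap i j) π := by
  have hij : i ≠ j := by rintro rfl; exact lt_irrefl _ hσ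
  have h2 : (σ * Equiv.swap i j) i = σ j := by simp
  have h3 : (σ * Equiv.swap i j) j = σ i := by simp
  have hgij : g σ π i j = 0 := by
    rw [g, if_neg]
    rintro (⟨_, h⟩ | ⟨h, _⟩)
    · exact absurd hπ (lt_asymm h)
    · exact absurd hσ (lt_asymm h)
  have hgij' : g (σ * Equiv.swap i j) π i j = 1 := by
    rw [g, if_pos]
    right
    rw [h2, h3]
    exact ⟨hσ, hπ⟩
  have hmem : ∀ a ∈ Finset.univ \ ({i, j} : Finset (Fin n)), a ≠ i ∧ a ≠ j := by
    intro a ha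
    simp only [Finset.mem_sdiff, Finset.mem_insert, Finset.mem_singleton] at ha
    exact ⟨fun h => ha.2 (Or.inl h), fun h => ha.2 (Or.inr h)⟩
  have hsum : ∑ a ∈ Finset.univ \ ({i, j} : Finset (Fin n)), (g σ π a i + g σ π a j)
      ≤ ∑ a ∈ Finset.univ \ ({i, j} : Finset (Fin n)),
        (g (σ * Equiv.swap i j) π a i + g (σ * Equiv.swap i j) π a j) :=
    Finset.sum_le_sum fun a ha => key σ π i j a (hmem a ha).1 (hmem a ha).2 hσ hπ
  have hC : ∑ a ∈ Finset.univ \ ({i, j} : Finset (Fin n)),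
        ∑ b ∈ Finset.univ \ ({i, j} : Finset (Fin n)), g (σ * Equiv.swap i j) π a b
      = ∑ a ∈ Finset.univ \ ({i, j} : Finset (Fin n)),
        ∑ b ∈ Finset.univ \ ({i, j} : Finset (Fin n)), g σ π a b :=
    Finset.sum_congr rfl fun a ha => Finset.sum_congr rfl fun b hb =>
      offdiag_eq σ π i j a b (hmem a ha).1 (hmem a ha).2 (hmem b hb).1 (hmem b hb).2
  have hd1 := K2_decomp hij σ π
  have hd2 := K2_decomp hij (σ * Equiv.swap i j) π
  have he1 := K2_eq σ π
  have he2 := K2_eq (σ * Equiv.swap i j) π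
  omega

end Stmt4Aux

open Stmt4Aux Finset in
theorem stmt4 {n : ℕ} (θ : ℝ) (hθ : 0 < θ) (π : Equiv.Perm (Fin n)) (i j : Fin n)
    (hij : π i < π j) :
    expRank θ π j - expRank θ π i =
      ∑ σ ∈ Finset.univ.filter (fun σ : Equiv.Perm (Fin n) => σ i < σ j),
        (((σ j : ℕ) : ℝ) - ((σ i : ℕ) : ℝ)) *
          (mallowsP θ π σ - mallowsP θ π (σ * Equiv.swap i j))
    ∧ 0 < expRank θ π j - expRank θ π i := by
  have hne : i ≠ j := by rintro rfl; exact lt_irrefl _ hij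
  have hZ : 0 < ∑ σ' : Equiv.Perm (Fin n), Real.exp (-θ * kendall σ' π) :=
    Finset.sum_pos (fun _ _ => Real.exp_pos _) Finset.univ_nonempty
  -- positivity of individual factors
  have hterm : ∀ σ : Equiv.Perm (Fin n), σ i < σ j →
      0 < mallowsP θ π σ - mallowsP θ π (σ * Equiv.swap i j) := by
    intro σ hσ
    have hk := kendall_lt σ π i j hσ hij
    rw [mallowsP, mallowsP, div_sub_div_same]
    apply div_pos _ hZ
    rw [sub_pos]
    apply Real.exp_lt_exp.2
    have hkR : (kendall σ π : ℝ) < (kendall (σ * Equiv.swap i j) π : ℝ) := by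
      exact_mod_cast hk
    nlinarith
  -- the identity
  have hid : expRank θ π j - expRank θ π i =
      ∑ σ ∈ Finset.univ.filter (fun σ : Equiv.Perm (Fin n) => σ i < σ j),
        (((σ j : ℕ) : ℝ) - ((σ i : ℕ) : ℝ)) *
          (mallowsP θ π σ - mallowsP θ π (σ * Equiv.swap i j)) := by
    rw [expRank, expRank, ← Finset.sum_sub_distrib]
    have h1 : ∀ σ : Equiv.Perm (Fin n),
        (((σ j : ℕ) : ℝ) + 1) * mallowsP θ π σ - (((σ i : ℕ) : ℝ) + 1) * mallowsP θ π σ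
        = (((σ j : ℕ) : ℝ) - ((σ i : ℕ) : ℝ)) * mallowsP θ π σ := fun σ => by ring
    rw [Finset.sum_congr rfl fun σ _ => h1 σ]
    rw [← Finset.sum_filter_add_sum_filter_not Finset.univ
      (fun σ : Equiv.Perm (Fin n) => σ i < σ j)]
    have hswap : ∑ σ ∈ Finset.univ.filter (fun σ : Equiv.Perm (Fin n) => ¬ σ i < σ j),
          (((σ j : ℕ) : ℝ) - ((σ i : ℕ) : ℝ)) * mallowsP θ π σ
        = ∑ σ ∈ Finset.univ.filter (fun σ : Equiv.Perm (Fin n) => σ i < σ j),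
          (((σ i : ℕ) : ℝ) - ((σ j : ℕ) : ℝ)) * mallowsP θ π (σ * Equiv.swap i j) := by
      refine Finset.sum_nbij' (fun σ => σ * Equiv.swap i j) (fun σ => σ * Equiv.swap i j)
        ?_ ?_ ?_ ?_ ?_
      · intro σ hσ
        simp only [Finset.mem_filter, Finset.mem_univ, true_and] at hσ ⊢
        have : σ j ≠ σ i := fun h => hne (σ.injective h).symm
        have : σ j < σ i := lt_of_le_of_ne (not_lt.1 hσ) this
        simpa using this
      · intro σ hσ
        simp only [Finset.mem_filter, Finset.mem_univ, true_and] at hσ ⊢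
        simpa using not_lt.2 hσ.le
      · intro σ _
        simp [mul_assoc, Equiv.swap_mul_self]
      · intro σ _
        simp [mul_assoc, Equiv.swap_mul_self]
      · intro σ _
        have e1 : (σ * Equiv.swap i j) i = σ j := by simp
        have e2 : (σ * Equiv.swap i j) j = σ i := by simp
        have e3 : σ * Equiv.swap i j * Equiv.swap i j = σ := by
          rw [mul_assoc, Equiv.swap_mul_self, mul_one]
        simp only [e1, e2, e3]
    rw [hswap, ← Finset.sum_add_distrib]
    refine Finset.sum_congr rfl fun σ _ => ?_
    ring
  refine ⟨hid, ?_⟩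
  rw [hid]
  apply Finset.sum_pos
  · intro σ hσ
    simp only [Finset.mem_filter, Finset.mem_univ, true_and] at hσ
    have hcast : ((σ i : ℕ) : ℝ) < ((σ j : ℕ) : ℝ) := by exact_mod_cast hσ
    exact mul_pos (by linarith) (hterm σ hσ)
  · exact ⟨π, Finset.mem_filter.2 ⟨Finset.mem_univ _, hij⟩⟩
end

section
/- Let π ∈ S_n and θ > 0, and let σ ~ MM(π, θ) under the Kendall's-τ distance. Then ∑_{i=1}^n E[σ(i)] = n(n+1)/2, and for any items i, j with π(i) < π(j), E[σ(i)] < E[σ(j)]; hence sorting items by expected rank recovers π (Borda is a consistent estimator of the modal ranking). -/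
/-!
Write `τ = swap i j` and suppose `π i < π j` and `σ i < σ j`. An ordered pair `(a, b)` on which
`σ` increases stops doing so when both entries are moved by `τ` only if `a = i` or `b = j`; one
on which `π` decreases stops doing so only if `a = j` or `b = i`. Hence, counting discordant
pairs among `(a, b)` and `(τ a, τ b)`, the count never decreases when `σ` is replaced by `σ * τ`,
and it increases for `(i, j), (j, i)`: `σ * τ` is strictly farther from `π` than `σ`, so it has
smaller Mallows weight. Pairing `σ` with `σ * τ` then gives
`2 (E σ(j) - E σ(i)) = ∑ σ, (σ j - σ i) (p σ - p (σ * τ))`, a sum of positive terms.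
-/

open Finset Equiv

section Discordance

variable {α β γ : Type*} [LinearOrder β] [LinearOrder γ]

def discordantPairs [Fintype α] (f : α → β) (g : α → γ) : Finset (α × α) :=
  univ.filter fun p => f p.1 < f p.2 ∧ g p.2 < g p.1

variable [DecidableEq α] {f : α → β} {g : α → γ} {i j : α}

lemma eq_or_eq_of_lt_of_comp_swap_le (hf : f i < f j) {a b : α} (hab : f a < f b)
    (hswap : f (swap i j b) ≤ f (swap i j a)) : a = i ∨ b = j := by
  by_contra! h
  rcases eq_or_ne a j with rfl | haj <;> rcases eq_or_ne b i with rfl | hbi <;>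
    simp_all [swap_apply_of_ne_of_ne] <;> order

lemma not_discordant_and_comp_swap_concordant (hf : f i < f j) (hg : g i < g j) (a b : α) :
    ¬ (f a < f b ∧ f (swap i j b) ≤ f (swap i j a) ∧
      g b < g a ∧ g (swap i j a) ≤ g (swap i j b)) := by
  rintro ⟨hfab, hfs, hgba, hgs⟩
  have hij : i ≠ j := by rintro rfl; exact lt_irrefl _ hf
  rcases eq_or_eq_of_lt_of_comp_swap_le hf hfab hfs with rfl | rfl <;>
    rcases eq_or_eq_of_lt_of_comp_swap_le hg hgba hgs with h | h <;>
    simp_all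

lemma discordant_indicator_add_le (hf : f i < f j) (hg : g i < g j) (a b : α) :
    ((if f a < f b ∧ g b < g a then 1 else 0) +
      if f (swap i j a) < f (swap i j b) ∧ g (swap i j b) < g (swap i j a) then 1 else 0) ≤
    ((if f (swap i j a) < f (swap i j b) ∧ g b < g a then 1 else 0) +
      if f a < f b ∧ g (swap i j b) < g (swap i j a) then 1 else 0 : ℕ) := by
  have h₁ := not_discordant_and_comp_swap_concordant hf hg a b
  have h₂ := not_discordant_and_comp_swap_concordant hf hg (swap i j a) (swap i j b)
  simp only [swap_apply_self, not_and, not_le] at h₁ h₂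
  split_ifs <;> grind

lemma card_discordantPairs_lt_comp_swap [Fintype α] (hf : f i < f j) (hg : g i < g j) :
    #(discordantPairs f g) < #(discordantPairs (f ∘ swap i j) g) := by
  let τ : α × α ≃ α × α := (swap i j).prodCongr (swap i j)
  have two_mul_card (φ : α → β) : 2 * #(discordantPairs φ g) = ∑ p : α × α,
      (((if φ p.1 < φ p.2 ∧ g p.2 < g p.1 then 1 else 0) +
        if φ (τ p).1 < φ (τ p).2 ∧ g (τ p).2 < g (τ p).1 then 1 else 0) : ℕ) := by
    rw [sum_add_distrib, Equiv.sum_comp τ (fun p => if φ p.1 < φ p.2 ∧ g p.2 < g p.1 then 1 else 0),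
      discordantPairs, card_filter]
    ring
  suffices h : 2 * #(discordantPairs f g) < 2 * #(discordantPairs (f ∘ swap i j) g) by omega
  rw [two_mul_card, two_mul_card]
  refine sum_lt_sum (fun p _ => ?_) ⟨(j, i), mem_univ _, ?_⟩
  · simpa [τ, add_comm] using discordant_indicator_add_le hf hg p.1 p.2
  · simp [τ, hf, hg, hf.not_gt, hg.not_gt]

end Discordance

section Mallows

variable {n : ℕ}

lemma kendall_eq_card_discordantPairs (σ π : Perm (Fin n)) :
    kendall σ π = #(discordantPairs σ π) := by
  refine card_nbij' (fun p => if σ p.1 < σ p.2 then p else p.swap)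
    (fun p => if p.1 < p.2 then p else p.swap) ?_ ?_ ?_ ?_ <;>
  · rintro ⟨a, b⟩ h
    simp only [discordantPairs, coe_filter, mem_univ, true_and, Set.mem_ofPred_eq] at h ⊢
    split_ifs <;> grind

lemma kendall_lt_kendall_mul_swap {σ π : Perm (Fin n)} {i j : Fin n} (hσ : σ i < σ j)
    (hπ : π i < π j) : kendall σ π < kendall (σ * swap i j) π := by
  rw [kendall_eq_card_discordantPairs, kendall_eq_card_discordantPairs, Perm.coe_mul]
  exact card_discordantPairs_lt_comp_swap hσ hπ

lemma sum_exp_kendall_pos (θ : ℝ) (π : Perm (Fin n)) :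
    0 < ∑ σ : Perm (Fin n), Real.exp (-θ * kendall σ π) :=
  sum_pos (fun _ _ => Real.exp_pos _) univ_nonempty

lemma sum_mallowsP (θ : ℝ) (π : Perm (Fin n)) : ∑ σ, mallowsP θ π σ = 1 := by
  simp only [mallowsP]
  rw [← sum_div, div_self (sum_exp_kendall_pos θ π).ne']

lemma mallowsP_lt_of_kendall_lt {θ : ℝ} (hθ : 0 < θ) {π σ σ' : Perm (Fin n)}
    (h : kendall σ π < kendall σ' π) : mallowsP θ π σ' < mallowsP θ π σ := by
  have h' : (kendall σ π : ℝ) < kendall σ' π := by exact_mod_cast h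
  refine div_lt_div_of_pos_right ?_ (sum_exp_kendall_pos θ π)
  exact Real.exp_lt_exp.mpr (by nlinarith)

lemma sum_fin_val_add_one (n : ℕ) : ∑ i : Fin n, ((i : ℝ) + 1) = n * (n + 1) / 2 := by
  induction n with
  | zero => simp
  | succ n ih =>
    rw [Fin.sum_univ_castSucc]
    simp only [Fin.val_castSucc, ih, Fin.val_last, Nat.cast_add, Nat.cast_one]
    ring

lemma sum_expRank (θ : ℝ) (π : Perm (Fin n)) :
    ∑ i, expRank θ π i = n * (n + 1) / 2 := by
  have hσ (σ : Perm (Fin n)) : ∑ i, ((σ i : ℝ) + 1) = n * (n + 1) / 2 := by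
    rw [Equiv.sum_comp σ (fun k : Fin n => (k : ℝ) + 1), sum_fin_val_add_one]
  simp only [expRank]
  rw [sum_comm]
  simp_rw [← sum_mul, hσ, ← mul_sum, sum_mallowsP, mul_one]

lemma two_mul_expRank_sub (θ : ℝ) (π : Perm (Fin n)) (i j : Fin n) :
    2 * (expRank θ π j - expRank θ π i) = ∑ σ : Perm (Fin n),
      ((σ j : ℝ) - σ i) * (mallowsP θ π σ - mallowsP θ π (σ * swap i j)) := by
  have h := Equiv.sum_comp (Equiv.mulRight (swap i j))
    fun σ : Perm (Fin n) => ((σ j : ℝ) - σ i) * mallowsP θ π σ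
  simp only [coe_mulRight, Perm.coe_mul, Function.comp_apply, swap_apply_left,
    swap_apply_right] at h
  have hdiff : expRank θ π j - expRank θ π i =
      ∑ σ : Perm (Fin n), ((σ j : ℝ) - σ i) * mallowsP θ π σ := by
    simp only [expRank, ← sum_sub_distrib]
    exact sum_congr rfl fun _ _ => by ring
  rw [two_mul, hdiff]
  nth_rw 2 [← h]
  rw [← sum_add_distrib]
  exact sum_congr rfl fun σ _ => by ring

lemma rank_gap_mul_mallowsP_gap_pos {θ : ℝ} (hθ : 0 < θ) {π : Perm (Fin n)} {i j : Fin n}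
    (hπ : π i < π j) (σ : Perm (Fin n)) :
    0 < ((σ j : ℝ) - σ i) * (mallowsP θ π σ - mallowsP θ π (σ * swap i j)) := by
  have hij : i ≠ j := by rintro rfl; exact lt_irrefl _ hπ
  rcases lt_or_gt_of_ne (σ.injective.ne hij) with hσ | hσ
  · have hp := mallowsP_lt_of_kendall_lt hθ (kendall_lt_kendall_mul_swap hσ hπ)
    have hσ' : (σ i : ℝ) < σ j := by exact_mod_cast hσ
    exact mul_pos (by linarith) (by linarith)
  · have hστ : (σ * swap i j) i < (σ * swap i j) j := by simpa using hσ
    have hp := mallowsP_lt_of_kendall_lt hθ (kendall_lt_kendall_mul_swap hστ hπ)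
    rw [mul_swap_mul_self] at hp
    have hσ' : (σ j : ℝ) < σ i := by exact_mod_cast hσ
    exact mul_pos_of_neg_of_neg (by linarith) (by linarith)

end Mallows

theorem stmt18 {n : ℕ} (θ : ℝ) (hθ : 0 < θ) (π : Equiv.Perm (Fin n)) :
    (∑ i : Fin n, expRank θ π i) = ((n:ℝ) * ((n:ℝ)+1))/2
    ∧ ∀ i j : Fin n, π i < π j → expRank θ π i < expRank θ π j := by
  refine ⟨sum_expRank θ π, fun i j hπ => ?_⟩
  have h := two_mul_expRank_sub θ π i j
  have hpos := sum_pos (fun σ _ => rank_gap_mul_mallowsP_gap_pos hθ hπ σ) univ_nonempty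
  linarith
end
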